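/- Let (G, e) be the 2-sum of (G_1, e_1) and (G_2, e_2), obtained by gluing G_1 and G_2 along the identified edge e = e_1 = e_2, where e_i is neither a bridge nor a loop in G_i. Then the spanning trees of G \ e (deletion) are in bijection with the disjoint union of (spanning trees of G_1/e_1) × (spanning trees of G_2 \ e_2) and (spanning trees of G_1 \ e_1) × (spanning trees of G_2/e_2), while spanning trees of G/e are in bijection with (spanning trees of G_1/e_1) × (spanning trees of G_2/e_2). -/

import Mathlib

open Classical

/-- A finite multigraph: a vertex type, an edge type, and an endpoint map into
unordered pairs of vertices. -/
structure MG where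
  V : Type
  E : Type
  fV : Fintype V
  fE : Fintype E
  ends : E → Sym2 V

attribute [instance] MG.fV MG.fE

namespace MG

/-- Reachability using only edges from the set `T`. -/
def ReachVia (G : MG) (T : Set G.E) (u v : G.V) : Prop :=
  Relation.ReflTransGen (fun a b => ∃ e ∈ T, G.ends e = s(a, b)) u v

/-- A multigraph is connected if it has a vertex and all vertices are mutually reachable. -/
def Connected (G : MG) : Prop :=
  Nonempty G.V ∧ ∀ u v : G.V, G.ReachVia Set.univ u v

/-- A spanning tree: a set of edges connecting all vertices whose cardinality is one less
than the number of vertices (equivalently, a spanning connected acyclic edge set). -/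
def IsSpanningTree (G : MG) (T : Set G.E) : Prop :=
  (∀ u v : G.V, G.ReachVia T u v) ∧ T.ncard + 1 = Nat.card G.V

/-- The number of spanning trees of `G`. -/
noncomputable def numSpanningTrees (G : MG) : ℕ :=
  Nat.card {T : Set G.E // G.IsSpanningTree T}

/-- `G` has a `K₄` minor: four disjoint nonempty branch sets, each connected inside itself,
with an edge of `G` between any two of them. -/
def HasK4Minor (G : MG) : Prop :=
  ∃ f : G.V → Option (Fin 4),
    (∀ i : Fin 4, ∃ v, f v = some i) ∧
    (∀ i : Fin 4, ∀ u v : G.V, f u = some i → f v = some i →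
      Relation.ReflTransGen
        (fun a b => f a = some i ∧ f b = some i ∧ ∃ e, G.ends e = s(a, b)) u v) ∧
    (∀ i j : Fin 4, i ≠ j → ∃ e : G.E, ∃ u v : G.V,
      G.ends e = s(u, v) ∧ f u = some i ∧ f v = some j)

/-- A series-parallel multigraph is one with no `K₄` minor. -/
def SeriesParallel (G : MG) : Prop := ¬ G.HasK4Minor

/-- An edge is a loop if its two endpoints coincide. -/
def IsLoop (G : MG) (e : G.E) : Prop := (G.ends e).IsDiag

/-- Deletion of the edge `e`. -/
noncomputable def delete (G : MG) (e : G.E) : MG where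
  V := G.V
  E := {e' : G.E // e' ≠ e}
  fV := inferInstance
  fE := Fintype.ofFinite _
  ends := fun e' => G.ends e'.1

/-- An edge is a bridge if deleting it yields a disconnected graph. -/
def IsBridge (G : MG) (e : G.E) : Prop := ¬ (G.delete e).Connected

/-- Contraction of the edge `e`: its two endpoints are identified and `e` is removed. -/
noncomputable def contract (G : MG) (e : G.E) : MG where
  V := Quot (fun a b : G.V => G.ends e = s(a, b))
  E := {e' : G.E // e' ≠ e}
  fV := Fintype.ofFinite _
  fE := Fintype.ofFinite _
  ends := fun e' => Sym2.map (Quot.mk _) (G.ends e'.1)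

end MG

namespace MG

/-- The 2-sum of `(G₁, e₁)` and `(G₂, e₂)`, where `e₁` has endpoints `x₁, y₁` and `e₂` has
endpoints `x₂, y₂`: the edges `e₁` and `e₂` are identified (with the orientation `x₁ ↦ x₂`,
`y₁ ↦ y₂`) into a single merged edge, the edge `none`. -/
noncomputable def twoSum (G₁ G₂ : MG) (e₁ : G₁.E) (e₂ : G₂.E)
    (x₁ y₁ : G₁.V) (x₂ y₂ : G₂.V) : MG where
  V := Quot (fun a b : G₁.V ⊕ G₂.V =>
    (a = Sum.inl x₁ ∧ b = Sum.inr x₂) ∨ (a = Sum.inl y₁ ∧ b = Sum.inr y₂))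
  E := Option ({f : G₁.E // f ≠ e₁} ⊕ {f : G₂.E // f ≠ e₂})
  fV := @Fintype.ofFinite _ (Finite.of_surjective (Quot.mk _) Quot.mk_surjective)
  fE := @Fintype.ofFinite _ inferInstance
  ends := fun e => e.elim
    s(Quot.mk _ (Sum.inl x₁), Quot.mk _ (Sum.inl y₁))
    (Sum.elim (fun f => Sym2.map (fun v => Quot.mk _ (Sum.inl v)) (G₁.ends f.1))
              (fun f => Sym2.map (fun v => Quot.mk _ (Sum.inr v)) (G₂.ends f.1)))

end MG

namespace MG

variable {G : MG}

lemma reach_refl (T : Set G.E) (a : G.V) : G.ReachVia T a a := Relation.ReflTransGen.refl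

lemma reach_symm {T : Set G.E} {a b : G.V} (h : G.ReachVia T a b) : G.ReachVia T b a := by
  induction h with
  | refl => exact Relation.ReflTransGen.refl
  | tail _ h ih =>
    obtain ⟨e, he, hends⟩ := h
    exact Relation.ReflTransGen.head ⟨e, he, by rw [hends, Sym2.eq_swap]⟩ ih

lemma reach_trans {T : Set G.E} {a b c : G.V} (h : G.ReachVia T a b) (h' : G.ReachVia T b c) :
    G.ReachVia T a c := Relation.ReflTransGen.trans h h'

lemma reach_mono {T U : Set G.E} (hTU : T ⊆ U) {a b : G.V} (h : G.ReachVia T a b) :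
    G.ReachVia U a b := by
  induction h with
  | refl => exact Relation.ReflTransGen.refl
  | tail _ h ih => obtain ⟨e, he, hends⟩ := h; exact ih.tail ⟨e, hTU he, hends⟩

lemma reach_step {T : Set G.E} {e : G.E} {a b : G.V} (he : e ∈ T) (h : G.ends e = s(a, b)) :
    G.ReachVia T a b := Relation.ReflTransGen.single ⟨e, he, h⟩

/-- The jump lemma: reachability after inserting one edge. -/
lemma reach_insert_iff {T : Set G.E} {e : G.E} {x y : G.V} (hxy : G.ends e = s(x, y))
    {a b : G.V} :
    G.ReachVia (insert e T) a b ↔ G.ReachVia T a b ∨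
      (G.ReachVia T a x ∧ G.ReachVia T y b) ∨ (G.ReachVia T a y ∧ G.ReachVia T x b) := by
  constructor
  · intro h
    induction h with
    | refl => exact Or.inl (reach_refl T a)
    | tail _ h ih =>
      obtain ⟨f, hf, hends⟩ := h
      rcases hf with rfl | hf
      · rw [hxy] at hends
        rcases Sym2.eq_iff.1 hends with ⟨rfl, rfl⟩ | ⟨rfl, rfl⟩
        · rcases ih with h | ⟨h1, h2⟩ | ⟨h1, h2⟩
          · exact Or.inr (Or.inl ⟨h, reach_refl T _⟩)
          · exact Or.inr (Or.inl ⟨h1, reach_refl T _⟩)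
          · exact Or.inl h1
        · rcases ih with h | ⟨h1, h2⟩ | ⟨h1, h2⟩
          · exact Or.inr (Or.inr ⟨h, reach_refl T _⟩)
          · exact Or.inl h1
          · exact Or.inr (Or.inr ⟨h1, reach_refl T _⟩)
      · rcases ih with h | ⟨h1, h2⟩ | ⟨h1, h2⟩
        · exact Or.inl (h.tail ⟨f, hf, hends⟩)
        · exact Or.inr (Or.inl ⟨h1, h2.tail ⟨f, hf, hends⟩⟩)
        · exact Or.inr (Or.inr ⟨h1, h2.tail ⟨f, hf, hends⟩⟩)
  · rintro (h | ⟨h1, h2⟩ | ⟨h1, h2⟩)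
    · exact reach_mono (Set.subset_insert e T) h
    · exact reach_trans (reach_mono (Set.subset_insert e T) h1)
        (reach_trans (reach_step (Set.mem_insert e T) hxy)
          (reach_mono (Set.subset_insert e T) h2))
    · exact reach_trans (reach_mono (Set.subset_insert e T) h1)
        (reach_trans (reach_symm (reach_step (Set.mem_insert e T) hxy))
          (reach_mono (Set.subset_insert e T) h2))

end MG
namespace MG

variable {G : MG}

lemma sym2_exists {α : Type*} (z : Sym2 α) : ∃ x y, z = s(x, y) :=
  Sym2.ind (fun x y => ⟨x, y, rfl⟩) z

lemma reach_equivalence (T : Set G.E) : Equivalence (G.ReachVia T) :=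
  ⟨reach_refl T, reach_symm, reach_trans⟩

lemma quot_mk_reach_eq_iff {T : Set G.E} {a b : G.V} :
    Quot.mk (G.ReachVia T) a = Quot.mk (G.ReachVia T) b ↔ G.ReachVia T a b := by
  rw [Quot.eq]
  exact (reach_equivalence T).eqvGen_iff

lemma reach_empty_iff {a b : G.V} : G.ReachVia ∅ a b ↔ a = b := by
  constructor
  · intro h
    induction h with
    | refl => rfl
    | tail _ h ih => obtain ⟨e, he, -⟩ := h; exact absurd he (Set.notMem_empty e)
  · rintro rfl; exact reach_refl _ _

private lemma card_option (β : Type*) [Fintype β] : Nat.card (Option β) = Nat.card β + 1 := by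
  simp [Nat.card_eq_fintype_card]

lemma card_quot_le (T : Set G.E) :
    Nat.card G.V ≤ T.ncard + Nat.card (Quot (G.ReachVia T)) := by
  refine Set.Finite.induction_on
    (motive := fun s _ => Nat.card G.V ≤ s.ncard + Nat.card (Quot (G.ReachVia s)))
    T (Set.toFinite T) ?_ ?_
  ·
    have hb : Function.Bijective (Quot.mk (G.ReachVia (∅ : Set G.E))) := by
      constructor
      · intro a b h
        exact reach_empty_iff.1 (quot_mk_reach_eq_iff.1 h)
      · exact Quot.mk_surjective
    simpa [Set.ncard_empty] using (Nat.card_eq_of_bijective _ hb).le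
  · intro e T he hT ih
    obtain ⟨x, y, hxy⟩ := sym2_exists (G.ends e)
    -- injection from Quot (ReachVia T) into Option (Quot (ReachVia (insert e T)))
    set R := G.ReachVia T with hR
    set R' := G.ReachVia (insert e T) with hR'
    have hmap : ∀ a b : G.V, R a b → Quot.mk R' a = Quot.mk R' b := by
      intro a b hab
      exact Quot.sound (reach_mono (Set.subset_insert e T) hab)
    let F : Quot R → Option (Quot R') := fun q =>
      if q = Quot.mk R y ∧ (Quot.mk R x : Quot R) ≠ Quot.mk R y then none
      else some (Quot.lift (Quot.mk R') hmap q)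
    have hinj : Function.Injective F := by
      intro q q'
      induction q using Quot.ind with | _ a =>
      induction q' using Quot.ind with | _ b =>
      intro hFab
      simp only [F] at hFab
      by_cases h1 : Quot.mk R a = Quot.mk R y ∧ (Quot.mk R x : Quot R) ≠ Quot.mk R y <;>
        by_cases h2 : Quot.mk R b = Quot.mk R y ∧ (Quot.mk R x : Quot R) ≠ Quot.mk R y
      · exact h1.1.trans h2.1.symm
      · rw [if_pos h1, if_neg h2] at hFab; exact absurd hFab (by simp)
      · rw [if_neg h1, if_pos h2] at hFab; exact absurd hFab (by simp)
      · rw [if_neg h1, if_neg h2] at hFab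
        simp only [Option.some.injEq] at hFab
        have hab : R' a b := quot_mk_reach_eq_iff.1 hFab
        rcases (reach_insert_iff hxy).1 hab with h | ⟨ha, hb⟩ | ⟨ha, hb⟩
        · exact Quot.sound h
        · -- a R x, y R b
          have hby : Quot.mk R b = Quot.mk R y := Quot.sound (reach_symm hb)
          have : Quot.mk R x = Quot.mk R y := by
            by_contra hne
            exact h2 ⟨hby, hne⟩
          have hxyR : R x y := quot_mk_reach_eq_iff.1 this
          exact Quot.sound (reach_trans ha (reach_trans hxyR (reach_symm (reach_symm hb))))
        · have hay : Quot.mk R a = Quot.mk R y := Quot.sound ha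
          have : Quot.mk R x = Quot.mk R y := by
            by_contra hne
            exact h1 ⟨hay, hne⟩
          have hxyR : R x y := quot_mk_reach_eq_iff.1 this
          exact Quot.sound (reach_trans ha (reach_trans (reach_symm hxyR) hb))
    haveI : Finite (Quot R') := Finite.of_surjective _ Quot.mk_surjective
    haveI := Fintype.ofFinite (Quot R')
    have hcard : Nat.card (Quot R) ≤ Nat.card (Quot R') + 1 := by
      calc Nat.card (Quot R) ≤ Nat.card (Option (Quot R')) :=
            Nat.card_le_card_of_injective F hinj
        _ = Nat.card (Quot R') + 1 := card_option _
    calc Nat.card G.V ≤ T.ncard + Nat.card (Quot R) := ih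
      _ ≤ T.ncard + (Nat.card (Quot R') + 1) := by omega
      _ = (insert e T).ncard + Nat.card (Quot R') := by
          rw [Set.ncard_insert_of_notMem he (Set.toFinite T)]; omega

lemma card_le_of_connected {T : Set G.E} (hconn : ∀ u v : G.V, G.ReachVia T u v) :
    Nat.card G.V ≤ T.ncard + 1 := by
  rcases isEmpty_or_nonempty G.V with hV | hV
  · simp [Nat.card_of_isEmpty]
  · have h1 : Nat.card (Quot (G.ReachVia T)) = 1 := by
      rw [Nat.card_eq_one_iff_unique]
      constructor
      · constructor
        intro q q'
        induction q using Quot.ind with | _ a =>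
        induction q' using Quot.ind with | _ b =>
        exact Quot.sound (hconn a b)
      · exact ⟨Quot.mk _ (Classical.arbitrary G.V)⟩
    have := card_quot_le (G := G) T
    omega

end MG
namespace MG

variable {G : MG}

section Contract

variable {e : G.E} {x y : G.V}

lemma contract_mk_eq (hxy : G.ends e = s(x, y)) {a b : G.V} :
    (Quot.mk _ a : (G.contract e).V) = Quot.mk _ b ↔
      a = b ∨ (a = x ∧ b = y) ∨ (a = y ∧ b = x) := by
  constructor
  · intro h
    rw [Quot.eq] at h
    have hr : ∀ a b : G.V, G.ends e = s(a, b) → (a = x ∧ b = y) ∨ (a = y ∧ b = x) := by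
      intro a b hab
      rw [hxy] at hab
      rcases Sym2.eq_iff.1 hab with ⟨h1, h2⟩ | ⟨h1, h2⟩ <;> tauto
    induction h with
    | rel a b hab => exact Or.inr (hr a b hab)
    | refl => exact Or.inl rfl
    | symm a b _ ih => tauto
    | trans a b c _ _ ih1 ih2 =>
      rcases ih1 with h | ⟨h1, h2⟩ | ⟨h1, h2⟩ <;> rcases ih2 with h' | ⟨h3, h4⟩ | ⟨h3, h4⟩ <;>
        subst_vars <;> tauto
  · rintro (rfl | ⟨rfl, rfl⟩ | ⟨rfl, rfl⟩)
    · rfl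
    · exact Quot.sound hxy
    · exact (Quot.sound (by rw [hxy, Sym2.eq_swap]))

lemma reach_of_contract_mk_eq (hxy : G.ends e = s(x, y)) {S : Set G.E} (heS : e ∈ S)
    {a b : G.V} (h : (Quot.mk _ a : (G.contract e).V) = Quot.mk _ b) :
    G.ReachVia S a b := by
  rcases (contract_mk_eq hxy).1 h with rfl | ⟨rfl, rfl⟩ | ⟨rfl, rfl⟩
  · exact reach_refl _ _
  · exact reach_step heS hxy
  · exact reach_symm (reach_step heS hxy)

lemma contract_reach_iff (hxy : G.ends e = s(x, y)) (T : Set (G.contract e).E) (a b : G.V) :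
    (G.contract e).ReachVia T (Quot.mk _ a) (Quot.mk _ b) ↔
      G.ReachVia (insert e (Subtype.val '' T)) a b := by
  set S : Set G.E := insert e (Subtype.val '' T) with hS
  have heS : e ∈ S := Set.mem_insert _ _
  constructor
  · intro h
    have key : ∀ q q' : (G.contract e).V, (G.contract e).ReachVia T q q' →
        ∀ a b : G.V, Quot.mk _ a = q → Quot.mk _ b = q' → G.ReachVia S a b := by
      intro q q' h
      induction h with
      | refl =>
        intro a b ha hb
        exact reach_of_contract_mk_eq hxy heS (ha.trans hb.symm)
      | @tail p q' _ hstep ih =>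
        intro a b ha hb
        obtain ⟨f, hf, hends⟩ := hstep
        obtain ⟨c, d, hcd⟩ := sym2_exists (G.ends f.1)
        have : s((Quot.mk _ c : (G.contract e).V), Quot.mk _ d) = s(p, q') := by
          simpa [MG.contract, hcd] using hends
        obtain ⟨p0, hp0⟩ := Quot.exists_rep p
        rcases Sym2.eq_iff.1 this with ⟨hc, hd⟩ | ⟨hc, hd⟩
        · refine reach_trans (ih a p0 ha hp0) ?_
          refine reach_trans (reach_of_contract_mk_eq hxy heS (hp0.trans hc.symm)) ?_
          refine reach_trans (reach_step (e := f.1) (Set.mem_insert_of_mem _ ⟨f, hf, rfl⟩) hcd) ?_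
          exact reach_of_contract_mk_eq hxy heS (hd.trans hb.symm)
        · refine reach_trans (ih a p0 ha hp0) ?_
          refine reach_trans (reach_of_contract_mk_eq hxy heS (hp0.trans hd.symm)) ?_
          refine reach_trans (reach_symm (reach_step (e := f.1)
            (Set.mem_insert_of_mem _ ⟨f, hf, rfl⟩) hcd)) ?_
          exact reach_of_contract_mk_eq hxy heS (hc.trans hb.symm)
    exact key _ _ h a b rfl rfl
  · intro h
    induction h with
    | refl => exact reach_refl _ _
    | @tail c d hcd hstep ih =>
      obtain ⟨g, hg, hends⟩ := hstep
      rcases hg with rfl | ⟨f, hfT, rfl⟩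
      · have hmk : (Quot.mk (fun a b => G.ends g = s(a, b)) c) = Quot.mk _ d := by
          refine (contract_mk_eq hxy).2 ?_
          rw [hxy] at hends
          rcases Sym2.eq_iff.1 hends with ⟨h1, h2⟩ | ⟨h1, h2⟩ <;> tauto
        exact hmk ▸ ih
      · refine ih.tail ⟨f, hfT, ?_⟩
        show Sym2.map _ (G.ends f.1) = _
        rw [hends]
        rfl

/-- The vertex set of a contraction, as an equiv with a subtype. -/
noncomputable def contractVEquiv (hxy : G.ends e = s(x, y)) (hne : x ≠ y) :
    (G.contract e).V ≃ {v : G.V // v ≠ y} where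
  toFun := Quot.lift (fun v => if h : v = y then ⟨x, hne⟩ else ⟨v, h⟩) (by
    intro a b hab
    rw [hxy] at hab
    rcases Sym2.eq_iff.1 hab with ⟨rfl, rfl⟩ | ⟨rfl, rfl⟩
    · simp [hne]
    · simp [hne])
  invFun := fun v => Quot.mk _ v.1
  left_inv := fun q => by
    induction q using Quot.ind with
    | _ v =>
      show Quot.mk _ ((if h : v = y then (⟨x, hne⟩ : {v : G.V // v ≠ y}) else ⟨v, h⟩) : {v : G.V // v ≠ y}).1 = Quot.mk _ v
      by_cases h : v = y
      · rw [dif_pos h]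
        subst h
        exact Quot.sound hxy
      · rw [dif_neg h]
  right_inv := by
    rintro ⟨v, hv⟩
    simp [hv]

lemma card_contract_V (hxy : G.ends e = s(x, y)) (hne : x ≠ y) :
    Nat.card (G.contract e).V + 1 = Nat.card G.V := by
  have h1 : Nat.card (G.contract e).V = Nat.card {v : G.V // v ≠ y} :=
    Nat.card_congr (contractVEquiv hxy hne)
  have h2 : Nat.card {v : G.V // v ≠ y} + 1 = Nat.card G.V := by
    classical
    rw [Nat.card_eq_fintype_card, Nat.card_eq_fintype_card]
    have := Fintype.card_subtype_compl (p := fun v : G.V => v = y)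
    rw [Fintype.card_subtype_eq] at this
    have hpos : 0 < Fintype.card G.V := Fintype.card_pos_iff.2 ⟨y⟩
    simp only [ne_eq]
    rw [this]
    omega
  omega

end Contract

section Delete

variable {e : G.E}

lemma delete_reach_iff (T : Set (G.delete e).E) (a b : G.V) :
    (G.delete e).ReachVia T a b ↔ G.ReachVia (Subtype.val '' T) a b := by
  constructor
  · intro h
    induction h with
    | refl => exact reach_refl _ _
    | tail _ hstep ih =>
      obtain ⟨f, hf, hends⟩ := hstep
      exact ih.tail ⟨f.1, ⟨f, hf, rfl⟩, hends⟩
  · intro h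
    induction h with
    | refl => exact reach_refl _ _
    | tail _ hstep ih =>
      obtain ⟨g, ⟨f, hfT, rfl⟩, hends⟩ := hstep
      exact ih.tail ⟨f, hfT, hends⟩

end Delete

end MG
namespace MG

section TwoSumDefs

variable (G₁ G₂ : MG) (e₁ : G₁.E) (e₂ : G₂.E) (x₁ y₁ : G₁.V) (x₂ y₂ : G₂.V)

noncomputable def inc1 (v : G₁.V) : (G₁.twoSum G₂ e₁ e₂ x₁ y₁ x₂ y₂).V :=
  Quot.mk _ (Sum.inl v)

noncomputable def inc2 (w : G₂.V) : (G₁.twoSum G₂ e₁ e₂ x₁ y₁ x₂ y₂).V :=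
  Quot.mk _ (Sum.inr w)

noncomputable def tsSet (A : Set G₁.E) (B : Set G₂.E) :
    Set (G₁.twoSum G₂ e₁ e₂ x₁ y₁ x₂ y₂).E :=
  fun u => Option.elim u False (Sum.elim (fun f => f.1 ∈ A) (fun f => f.1 ∈ B))

end TwoSumDefs

/-- Side-1 edge set, augmented by `e₁` if side 2 connects the gates. -/
noncomputable def ext1 (G₁ G₂ : MG) (e₁ : G₁.E) (e₂ : G₂.E) (x₁ y₁ : G₁.V) (x₂ y₂ : G₂.V)
    (A : Set G₁.E) (B : Set G₂.E) : Set G₁.E :=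
  if G₂.ReachVia B x₂ y₂ then insert e₁ A else A

/-- Side-2 edge set, augmented by `e₂` if side 1 connects the gates. -/
noncomputable def ext2 (G₁ G₂ : MG) (e₁ : G₁.E) (e₂ : G₂.E) (x₁ y₁ : G₁.V) (x₂ y₂ : G₂.V)
    (A : Set G₁.E) (B : Set G₂.E) : Set G₂.E :=
  if G₁.ReachVia A x₁ y₁ then insert e₂ B else B

/-- The decomposed reachability relation on the two-sum. -/
noncomputable def tsD (G₁ G₂ : MG) (e₁ : G₁.E) (e₂ : G₂.E) (x₁ y₁ : G₁.V) (x₂ y₂ : G₂.V)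
    (A : Set G₁.E) (B : Set G₂.E) :
    (G₁.V ⊕ G₂.V) → (G₁.V ⊕ G₂.V) → Prop := fun s t =>
  match s, t with
  | .inl u, .inl v => G₁.ReachVia (ext1 G₁ G₂ e₁ e₂ x₁ y₁ x₂ y₂ A B) u v
  | .inl u, .inr w =>
      (G₁.ReachVia (ext1 G₁ G₂ e₁ e₂ x₁ y₁ x₂ y₂ A B) u x₁ ∧
        G₂.ReachVia (ext2 G₁ G₂ e₁ e₂ x₁ y₁ x₂ y₂ A B) x₂ w) ∨
      (G₁.ReachVia (ext1 G₁ G₂ e₁ e₂ x₁ y₁ x₂ y₂ A B) u y₁ ∧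
        G₂.ReachVia (ext2 G₁ G₂ e₁ e₂ x₁ y₁ x₂ y₂ A B) y₂ w)
  | .inr w, .inl u =>
      (G₂.ReachVia (ext2 G₁ G₂ e₁ e₂ x₁ y₁ x₂ y₂ A B) w x₂ ∧
        G₁.ReachVia (ext1 G₁ G₂ e₁ e₂ x₁ y₁ x₂ y₂ A B) x₁ u) ∨
      (G₂.ReachVia (ext2 G₁ G₂ e₁ e₂ x₁ y₁ x₂ y₂ A B) w y₂ ∧
        G₁.ReachVia (ext1 G₁ G₂ e₁ e₂ x₁ y₁ x₂ y₂ A B) y₁ u)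
  | .inr w, .inr w' => G₂.ReachVia (ext2 G₁ G₂ e₁ e₂ x₁ y₁ x₂ y₂ A B) w w'

section TwoSumLemmas

variable {G₁ G₂ : MG} {e₁ : G₁.E} {e₂ : G₂.E} {x₁ y₁ : G₁.V} {x₂ y₂ : G₂.V}

lemma ts_mk_eq (hne1 : x₁ ≠ y₁) (hne2 : x₂ ≠ y₂) (s t : G₁.V ⊕ G₂.V) :
    (Quot.mk _ s : (G₁.twoSum G₂ e₁ e₂ x₁ y₁ x₂ y₂).V) = Quot.mk _ t ↔
      s = t ∨ (s = .inl x₁ ∧ t = .inr x₂) ∨ (s = .inr x₂ ∧ t = .inl x₁) ∨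
        (s = .inl y₁ ∧ t = .inr y₂) ∨ (s = .inr y₂ ∧ t = .inl y₁) := by
  rw [Quot.eq]
  constructor
  · intro h
    induction h with
    | rel a b hab => tauto
    | refl => tauto
    | symm a b _ ih => tauto
    | trans a b c _ _ ih1 ih2 =>
      rcases ih1 with rfl | ⟨rfl, rfl⟩ | ⟨rfl, rfl⟩ | ⟨rfl, rfl⟩ | ⟨rfl, rfl⟩ <;>
        rcases ih2 with h2 | ⟨h2, h3⟩ | ⟨h2, h3⟩ | ⟨h2, h3⟩ | ⟨h2, h3⟩ <;>
          simp_all <;> tauto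
  · rintro (rfl | ⟨rfl, rfl⟩ | ⟨rfl, rfl⟩ | ⟨rfl, rfl⟩ | ⟨rfl, rfl⟩)
    · exact Relation.EqvGen.refl _
    · exact Relation.EqvGen.rel _ _ (Or.inl ⟨rfl, rfl⟩)
    · exact Relation.EqvGen.symm _ _ (Relation.EqvGen.rel _ _ (Or.inl ⟨rfl, rfl⟩))
    · exact Relation.EqvGen.rel _ _ (Or.inr ⟨rfl, rfl⟩)
    · exact Relation.EqvGen.symm _ _ (Relation.EqvGen.rel _ _ (Or.inr ⟨rfl, rfl⟩))

lemma incx_eq : inc1 G₁ G₂ e₁ e₂ x₁ y₁ x₂ y₂ x₁ = inc2 G₁ G₂ e₁ e₂ x₁ y₁ x₂ y₂ x₂ :=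
  Quot.sound (Or.inl ⟨rfl, rfl⟩)

lemma incy_eq : inc1 G₁ G₂ e₁ e₂ x₁ y₁ x₂ y₂ y₁ = inc2 G₁ G₂ e₁ e₂ x₁ y₁ x₂ y₂ y₂ :=
  Quot.sound (Or.inr ⟨rfl, rfl⟩)

variable {A : Set G₁.E} {B : Set G₂.E}

lemma subset_ext1 : A ⊆ ext1 G₁ G₂ e₁ e₂ x₁ y₁ x₂ y₂ A B := by
  unfold ext1; split
  · exact Set.subset_insert _ _
  · exact subset_rfl

lemma subset_ext2 : B ⊆ ext2 G₁ G₂ e₁ e₂ x₁ y₁ x₂ y₂ A B := by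
  unfold ext2; split
  · exact Set.subset_insert _ _
  · exact subset_rfl

lemma reach_ext1_xy (hx₁ : G₁.ends e₁ = s(x₁, y₁))
    (hd : G₁.ReachVia A x₁ y₁ ∨ G₂.ReachVia B x₂ y₂) :
    G₁.ReachVia (ext1 G₁ G₂ e₁ e₂ x₁ y₁ x₂ y₂ A B) x₁ y₁ := by
  unfold ext1
  by_cases hc : G₂.ReachVia B x₂ y₂
  · rw [if_pos hc]
    exact reach_step (Set.mem_insert _ _) hx₁
  · rw [if_neg hc]
    tauto

lemma reach_ext2_xy (hx₂ : G₂.ends e₂ = s(x₂, y₂))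
    (hd : G₁.ReachVia A x₁ y₁ ∨ G₂.ReachVia B x₂ y₂) :
    G₂.ReachVia (ext2 G₁ G₂ e₁ e₂ x₁ y₁ x₂ y₂ A B) x₂ y₂ := by
  unfold ext2
  by_cases hc : G₁.ReachVia A x₁ y₁
  · rw [if_pos hc]
    exact reach_step (Set.mem_insert _ _) hx₂
  · rw [if_neg hc]
    tauto

lemma ext1_back (hx₁ : G₁.ends e₁ = s(x₁, y₁)) {u v : G₁.V}
    (h : G₁.ReachVia (ext1 G₁ G₂ e₁ e₂ x₁ y₁ x₂ y₂ A B) u v) :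
    G₁.ReachVia A u v ∨ (G₁.ReachVia A u x₁ ∧ G₁.ReachVia A y₁ v) ∨
      (G₁.ReachVia A u y₁ ∧ G₁.ReachVia A x₁ v) := by
  unfold ext1 at h
  by_cases hc : G₂.ReachVia B x₂ y₂
  · rw [if_pos hc] at h
    exact (reach_insert_iff hx₁).1 h
  · rw [if_neg hc] at h
    exact Or.inl h

lemma ext2_back (hx₂ : G₂.ends e₂ = s(x₂, y₂)) {w w' : G₂.V}
    (h : G₂.ReachVia (ext2 G₁ G₂ e₁ e₂ x₁ y₁ x₂ y₂ A B) w w') :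
    G₂.ReachVia B w w' ∨ (G₂.ReachVia B w x₂ ∧ G₂.ReachVia B y₂ w') ∨
      (G₂.ReachVia B w y₂ ∧ G₂.ReachVia B x₂ w') := by
  unfold ext2 at h
  by_cases hc : G₁.ReachVia A x₁ y₁
  · rw [if_pos hc] at h
    exact (reach_insert_iff hx₂).1 h
  · rw [if_neg hc] at h
    exact Or.inl h

lemma ext1_xy_back (hx₁ : G₁.ends e₁ = s(x₁, y₁))
    (h : G₁.ReachVia (ext1 G₁ G₂ e₁ e₂ x₁ y₁ x₂ y₂ A B) x₁ y₁) :
    G₁.ReachVia A x₁ y₁ ∨ G₂.ReachVia B x₂ y₂ := by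
  unfold ext1 at h
  by_cases hc : G₂.ReachVia B x₂ y₂
  · exact Or.inr hc
  · rw [if_neg hc] at h
    exact Or.inl h

lemma ext2_xy_back (hx₂ : G₂.ends e₂ = s(x₂, y₂))
    (h : G₂.ReachVia (ext2 G₁ G₂ e₁ e₂ x₁ y₁ x₂ y₂ A B) x₂ y₂) :
    G₁.ReachVia A x₁ y₁ ∨ G₂.ReachVia B x₂ y₂ := by
  unfold ext2 at h
  by_cases hc : G₁.ReachVia A x₁ y₁
  · exact Or.inl hc
  · rw [if_neg hc] at h
    exact Or.inr h

lemma lift1 (hA : e₁ ∉ A) {u v : G₁.V} (h : G₁.ReachVia A u v) :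
    (G₁.twoSum G₂ e₁ e₂ x₁ y₁ x₂ y₂).ReachVia (tsSet G₁ G₂ e₁ e₂ x₁ y₁ x₂ y₂ A B)
      (inc1 G₁ G₂ e₁ e₂ x₁ y₁ x₂ y₂ u) (inc1 G₁ G₂ e₁ e₂ x₁ y₁ x₂ y₂ v) := by
  induction h with
  | refl => exact reach_refl _ _
  | @tail b c hb hstep ih =>
    obtain ⟨f, hf, hends⟩ := hstep
    refine ih.tail ⟨some (Sum.inl ⟨f, fun hfe => hA (hfe ▸ hf)⟩), hf, ?_⟩
    show Sym2.map _ (G₁.ends f) = _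
    rw [hends, Sym2.map_pair_eq]
    rfl

lemma lift2 (hB : e₂ ∉ B) {w w' : G₂.V} (h : G₂.ReachVia B w w') :
    (G₁.twoSum G₂ e₁ e₂ x₁ y₁ x₂ y₂).ReachVia (tsSet G₁ G₂ e₁ e₂ x₁ y₁ x₂ y₂ A B)
      (inc2 G₁ G₂ e₁ e₂ x₁ y₁ x₂ y₂ w) (inc2 G₁ G₂ e₁ e₂ x₁ y₁ x₂ y₂ w') := by
  induction h with
  | refl => exact reach_refl _ _
  | @tail b c hb hstep ih =>
    obtain ⟨f, hf, hends⟩ := hstep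
    refine ih.tail ⟨some (Sum.inr ⟨f, fun hfe => hB (hfe ▸ hf)⟩), hf, ?_⟩
    show Sym2.map _ (G₂.ends f) = _
    rw [hends, Sym2.map_pair_eq]
    rfl

lemma lift1' (hx₁ : G₁.ends e₁ = s(x₁, y₁)) (hA : e₁ ∉ A) (hB : e₂ ∉ B) {u v : G₁.V}
    (h : G₁.ReachVia (ext1 G₁ G₂ e₁ e₂ x₁ y₁ x₂ y₂ A B) u v) :
    (G₁.twoSum G₂ e₁ e₂ x₁ y₁ x₂ y₂).ReachVia (tsSet G₁ G₂ e₁ e₂ x₁ y₁ x₂ y₂ A B)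
      (inc1 G₁ G₂ e₁ e₂ x₁ y₁ x₂ y₂ u) (inc1 G₁ G₂ e₁ e₂ x₁ y₁ x₂ y₂ v) := by
  unfold ext1 at h
  by_cases hc : G₂.ReachVia B x₂ y₂
  · rw [if_pos hc] at h
    have hbridge : (G₁.twoSum G₂ e₁ e₂ x₁ y₁ x₂ y₂).ReachVia
        (tsSet G₁ G₂ e₁ e₂ x₁ y₁ x₂ y₂ A B)
        (inc1 G₁ G₂ e₁ e₂ x₁ y₁ x₂ y₂ x₁) (inc1 G₁ G₂ e₁ e₂ x₁ y₁ x₂ y₂ y₁) := by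
      rw [incx_eq, incy_eq]
      exact lift2 hB hc
    rcases (reach_insert_iff hx₁).1 h with h | ⟨h1, h2⟩ | ⟨h1, h2⟩
    · exact lift1 hA h
    · exact reach_trans (lift1 hA h1) (reach_trans hbridge (lift1 hA h2))
    · exact reach_trans (lift1 hA h1) (reach_trans (reach_symm hbridge) (lift1 hA h2))
  · rw [if_neg hc] at h
    exact lift1 hA h

lemma lift2' (hx₂ : G₂.ends e₂ = s(x₂, y₂)) (hA : e₁ ∉ A) (hB : e₂ ∉ B) {w w' : G₂.V}
    (h : G₂.ReachVia (ext2 G₁ G₂ e₁ e₂ x₁ y₁ x₂ y₂ A B) w w') :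
    (G₁.twoSum G₂ e₁ e₂ x₁ y₁ x₂ y₂).ReachVia (tsSet G₁ G₂ e₁ e₂ x₁ y₁ x₂ y₂ A B)
      (inc2 G₁ G₂ e₁ e₂ x₁ y₁ x₂ y₂ w) (inc2 G₁ G₂ e₁ e₂ x₁ y₁ x₂ y₂ w') := by
  unfold ext2 at h
  by_cases hc : G₁.ReachVia A x₁ y₁
  · rw [if_pos hc] at h
    have hbridge : (G₁.twoSum G₂ e₁ e₂ x₁ y₁ x₂ y₂).ReachVia
        (tsSet G₁ G₂ e₁ e₂ x₁ y₁ x₂ y₂ A B)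
        (inc2 G₁ G₂ e₁ e₂ x₁ y₁ x₂ y₂ x₂) (inc2 G₁ G₂ e₁ e₂ x₁ y₁ x₂ y₂ y₂) := by
      rw [← incx_eq, ← incy_eq]
      exact lift1 hA hc
    rcases (reach_insert_iff hx₂).1 h with h | ⟨h1, h2⟩ | ⟨h1, h2⟩
    · exact lift2 hB h
    · exact reach_trans (lift2 hB h1) (reach_trans hbridge (lift2 hB h2))
    · exact reach_trans (lift2 hB h1) (reach_trans (reach_symm hbridge) (lift2 hB h2))
  · rw [if_neg hc] at h
    exact lift2 hB h

end TwoSumLemmas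

end MG
namespace MG

section Master

variable {G₁ G₂ : MG} {e₁ : G₁.E} {e₂ : G₂.E} {x₁ y₁ : G₁.V} {x₂ y₂ : G₂.V}
variable {A : Set G₁.E} {B : Set G₂.E}

lemma tsD_refl (s : G₁.V ⊕ G₂.V) : tsD G₁ G₂ e₁ e₂ x₁ y₁ x₂ y₂ A B s s := by
  cases s with
  | inl u => exact reach_refl _ _
  | inr w => exact reach_refl _ _

lemma tsD_step1 {f : G₁.E} {a b : G₁.V} (hf : f ∈ A) (hab : G₁.ends f = s(a, b))
    {s : G₁.V ⊕ G₂.V} (h : tsD G₁ G₂ e₁ e₂ x₁ y₁ x₂ y₂ A B s (.inl a)) :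
    tsD G₁ G₂ e₁ e₂ x₁ y₁ x₂ y₂ A B s (.inl b) := by
  cases s with
  | inl u => exact h.tail ⟨f, subset_ext1 hf, hab⟩
  | inr w =>
    rcases h with ⟨h1, h2⟩ | ⟨h1, h2⟩
    · exact Or.inl ⟨h1, h2.tail ⟨f, subset_ext1 hf, hab⟩⟩
    · exact Or.inr ⟨h1, h2.tail ⟨f, subset_ext1 hf, hab⟩⟩

lemma tsD_step2 {f : G₂.E} {a b : G₂.V} (hf : f ∈ B) (hab : G₂.ends f = s(a, b))
    {s : G₁.V ⊕ G₂.V} (h : tsD G₁ G₂ e₁ e₂ x₁ y₁ x₂ y₂ A B s (.inr a)) :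
    tsD G₁ G₂ e₁ e₂ x₁ y₁ x₂ y₂ A B s (.inr b) := by
  cases s with
  | inl u =>
    rcases h with ⟨h1, h2⟩ | ⟨h1, h2⟩
    · exact Or.inl ⟨h1, h2.tail ⟨f, subset_ext2 hf, hab⟩⟩
    · exact Or.inr ⟨h1, h2.tail ⟨f, subset_ext2 hf, hab⟩⟩
  | inr w => exact h.tail ⟨f, subset_ext2 hf, hab⟩

lemma tsD_congr (hx₁ : G₁.ends e₁ = s(x₁, y₁)) (hx₂ : G₂.ends e₂ = s(x₂, y₂))
    (s t t' : G₁.V ⊕ G₂.V)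
    (h : (t = .inl x₁ ∧ t' = .inr x₂) ∨ (t = .inl y₁ ∧ t' = .inr y₂)) :
    tsD G₁ G₂ e₁ e₂ x₁ y₁ x₂ y₂ A B s t ↔ tsD G₁ G₂ e₁ e₂ x₁ y₁ x₂ y₂ A B s t' := by
  rcases h with ⟨rfl, rfl⟩ | ⟨rfl, rfl⟩
  · cases s with
    | inl u =>
      constructor
      · intro h; exact Or.inl ⟨h, reach_refl _ _⟩
      · rintro (⟨h, -⟩ | ⟨h1, h2⟩)
        · exact h
        · have hd := ext2_xy_back hx₂ (reach_symm h2)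
          exact reach_trans h1 (reach_symm (reach_ext1_xy hx₁ hd))
    | inr w =>
      constructor
      · rintro (⟨h, -⟩ | ⟨h1, h2⟩)
        · exact h
        · have hd := ext1_xy_back hx₁ (reach_symm h2)
          exact reach_trans h1 (reach_symm (reach_ext2_xy hx₂ hd))
      · intro h; exact Or.inl ⟨h, reach_refl _ _⟩
  · cases s with
    | inl u =>
      constructor
      · intro h; exact Or.inr ⟨h, reach_refl _ _⟩
      · rintro (⟨h1, h2⟩ | ⟨h, -⟩)
        · have hd := ext2_xy_back hx₂ h2
          exact reach_trans h1 (reach_ext1_xy hx₁ hd)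
        · exact h
    | inr w =>
      constructor
      · rintro (⟨h1, h2⟩ | ⟨h, -⟩)
        · have hd := ext1_xy_back hx₁ h2
          exact reach_trans h1 (reach_ext2_xy hx₂ hd)
        · exact h
      · intro h; exact Or.inr ⟨h, reach_refl _ _⟩

lemma ts_reach_iff (hx₁ : G₁.ends e₁ = s(x₁, y₁)) (hx₂ : G₂.ends e₂ = s(x₂, y₂))
    (hA : e₁ ∉ A) (hB : e₂ ∉ B) (s t : G₁.V ⊕ G₂.V) :
    (G₁.twoSum G₂ e₁ e₂ x₁ y₁ x₂ y₂).ReachVia (tsSet G₁ G₂ e₁ e₂ x₁ y₁ x₂ y₂ A B)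
      (Quot.mk _ s) (Quot.mk _ t) ↔ tsD G₁ G₂ e₁ e₂ x₁ y₁ x₂ y₂ A B s t := by
  constructor
  · intro h
    let P : (G₁.twoSum G₂ e₁ e₂ x₁ y₁ x₂ y₂).V → Prop :=
      Quot.lift (tsD G₁ G₂ e₁ e₂ x₁ y₁ x₂ y₂ A B s)
        (fun a b hab => propext (tsD_congr hx₁ hx₂ s a b hab))
    have key : ∀ q, (G₁.twoSum G₂ e₁ e₂ x₁ y₁ x₂ y₂).ReachVia
        (tsSet G₁ G₂ e₁ e₂ x₁ y₁ x₂ y₂ A B) (Quot.mk _ s) q → P q := by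
      intro q h
      induction h with
      | refl => exact tsD_refl s
      | @tail b c hb hstep ih =>
        obtain ⟨u, hu, hends⟩ := hstep
        rcases u with _ | (f | f)
        · exact hu.elim
        · obtain ⟨a, b', hab⟩ := sym2_exists (G₁.ends f.1)
          have h2 : s(inc1 G₁ G₂ e₁ e₂ x₁ y₁ x₂ y₂ a, inc1 G₁ G₂ e₁ e₂ x₁ y₁ x₂ y₂ b')
              = s(b, c) := by
            rw [← hends]
            show _ = Sym2.map _ (G₁.ends f.1)
            rw [hab]
            rfl
          rcases Sym2.eq_iff.1 h2 with ⟨hb1, hc1⟩ | ⟨hb1, hc1⟩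
          · subst hb1; subst hc1
            exact (tsD_step1 (show f.1 ∈ A from hu) hab
              (show tsD G₁ G₂ e₁ e₂ x₁ y₁ x₂ y₂ A B s (.inl a) from ih) :
                tsD G₁ G₂ e₁ e₂ x₁ y₁ x₂ y₂ A B s (.inl b'))
          · subst hb1; subst hc1
            exact (tsD_step1 (show f.1 ∈ A from hu)
              (show G₁.ends f.1 = s(b', a) by rw [hab, Sym2.eq_swap])
              (show tsD G₁ G₂ e₁ e₂ x₁ y₁ x₂ y₂ A B s (.inl b') from ih) :
                tsD G₁ G₂ e₁ e₂ x₁ y₁ x₂ y₂ A B s (.inl a))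
        · obtain ⟨a, b', hab⟩ := sym2_exists (G₂.ends f.1)
          have h2 : s(inc2 G₁ G₂ e₁ e₂ x₁ y₁ x₂ y₂ a, inc2 G₁ G₂ e₁ e₂ x₁ y₁ x₂ y₂ b')
              = s(b, c) := by
            rw [← hends]
            show _ = Sym2.map _ (G₂.ends f.1)
            rw [hab]
            rfl
          rcases Sym2.eq_iff.1 h2 with ⟨hb1, hc1⟩ | ⟨hb1, hc1⟩
          · subst hb1; subst hc1
            exact (tsD_step2 (show f.1 ∈ B from hu) hab
              (show tsD G₁ G₂ e₁ e₂ x₁ y₁ x₂ y₂ A B s (.inr a) from ih) :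
                tsD G₁ G₂ e₁ e₂ x₁ y₁ x₂ y₂ A B s (.inr b'))
          · subst hb1; subst hc1
            exact (tsD_step2 (show f.1 ∈ B from hu)
              (show G₂.ends f.1 = s(b', a) by rw [hab, Sym2.eq_swap])
              (show tsD G₁ G₂ e₁ e₂ x₁ y₁ x₂ y₂ A B s (.inr b') from ih) :
                tsD G₁ G₂ e₁ e₂ x₁ y₁ x₂ y₂ A B s (.inr a))
    exact key _ h
  · intro h
    cases s with
    | inl u =>
      cases t with
      | inl v => exact lift1' hx₁ hA hB h
      | inr w =>
        rcases h with ⟨h1, h2⟩ | ⟨h1, h2⟩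
        · have h2' := lift2' hx₂ hA hB h2
          rw [← incx_eq] at h2'
          exact reach_trans (lift1' hx₁ hA hB h1) h2'
        · have h2' := lift2' hx₂ hA hB h2
          rw [← incy_eq] at h2'
          exact reach_trans (lift1' hx₁ hA hB h1) h2'
    | inr w =>
      cases t with
      | inl v =>
        rcases h with ⟨h1, h2⟩ | ⟨h1, h2⟩
        · have h2' := lift1' hx₁ hA hB h2
          rw [incx_eq] at h2'
          exact reach_trans (lift2' hx₂ hA hB h1) h2'
        · have h2' := lift1' hx₁ hA hB h2
          rw [incy_eq] at h2'
          exact reach_trans (lift2' hx₂ hA hB h1) h2'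
      | inr w' => exact lift2' hx₂ hA hB h

end Master

end MG
namespace MG

lemma ncard_image_val {α : Type} {p : α → Prop} (T : Set {a : α // p a}) :
    (Subtype.val '' T).ncard = T.ncard :=
  Set.ncard_image_of_injective T Subtype.val_injective

lemma not_mem_image_val {α : Type} {e : α} (T : Set {a : α // a ≠ e}) :
    e ∉ Subtype.val '' T := by
  rintro ⟨⟨f, hf⟩, -, hfe⟩
  exact hf hfe

lemma contract_ST_iff {G : MG} {e : G.E} {x y : G.V} (hxy : G.ends e = s(x, y)) (hne : x ≠ y)
    (T : Set (G.contract e).E) :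
    (G.contract e).IsSpanningTree T ↔
      (∀ a b : G.V, G.ReachVia (insert e (Subtype.val '' T)) a b) ∧
        T.ncard + 2 = Nat.card G.V := by
  have hcard := card_contract_V hxy hne
  constructor
  · rintro ⟨hconn, hc⟩
    refine ⟨fun a b => (contract_reach_iff hxy T a b).1 (hconn _ _), by omega⟩
  · rintro ⟨hconn, hc⟩
    refine ⟨fun q q' => ?_, by omega⟩
    obtain ⟨a, rfl⟩ := Quot.exists_rep q
    obtain ⟨b, rfl⟩ := Quot.exists_rep q'
    exact (contract_reach_iff hxy T a b).2 (hconn a b)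

lemma delete_ST_iff {G : MG} {e : G.E} (T : Set (G.delete e).E) :
    (G.delete e).IsSpanningTree T ↔
      (∀ a b : G.V, G.ReachVia (Subtype.val '' T) a b) ∧ T.ncard + 1 = Nat.card G.V := by
  constructor
  · rintro ⟨hconn, hc⟩
    exact ⟨fun a b => (delete_reach_iff T a b).1 (hconn a b), hc⟩
  · rintro ⟨hconn, hc⟩
    exact ⟨fun a b => (delete_reach_iff T a b).2 (hconn a b), hc⟩

section TS

variable {G₁ G₂ : MG} {e₁ : G₁.E} {e₂ : G₂.E} {x₁ y₁ : G₁.V} {x₂ y₂ : G₂.V}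
variable {A : Set G₁.E} {B : Set G₂.E}

lemma ext1_sub : ext1 G₁ G₂ e₁ e₂ x₁ y₁ x₂ y₂ A B ⊆ insert e₁ A := by
  unfold ext1; split
  · exact subset_rfl
  · exact Set.subset_insert _ _

lemma ext2_sub : ext2 G₁ G₂ e₁ e₂ x₁ y₁ x₂ y₂ A B ⊆ insert e₂ B := by
  unfold ext2; split
  · exact subset_rfl
  · exact Set.subset_insert _ _

lemma ts_card (hne1 : x₁ ≠ y₁) (hne2 : x₂ ≠ y₂) :
    Nat.card (G₁.twoSum G₂ e₁ e₂ x₁ y₁ x₂ y₂).V + 2 = Nat.card G₁.V + Nat.card G₂.V := by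
  classical
  have hbij : Function.Bijective (Sum.elim (fun u => Quot.mk _ (Sum.inl u))
      (fun w => Quot.mk _ (Sum.inr w.1)) :
      G₁.V ⊕ {w : G₂.V // w ≠ x₂ ∧ w ≠ y₂} → (G₁.twoSum G₂ e₁ e₂ x₁ y₁ x₂ y₂).V) := by
    constructor
    · intro s t hst
      rcases s with u | ⟨w, hw1, hw2⟩ <;> rcases t with v | ⟨w', hw1', hw2'⟩
      · have := (ts_mk_eq hne1 hne2 (Sum.inl u) (Sum.inl v)).1 hst
        simp only [Sum.inl.injEq] at this
        simp_all
      · have := (ts_mk_eq hne1 hne2 (Sum.inl u) (Sum.inr w')).1 hst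
        simp_all
      · have := (ts_mk_eq hne1 hne2 (Sum.inr w) (Sum.inl v)).1 hst
        simp_all
      · have := (ts_mk_eq hne1 hne2 (Sum.inr w) (Sum.inr w')).1 hst
        simp_all
    · intro q
      obtain ⟨s, rfl⟩ := Quot.exists_rep q
      rcases s with u | w
      · exact ⟨Sum.inl u, rfl⟩
      · by_cases h1 : w = x₂
        · refine ⟨Sum.inl x₁, ?_⟩
          subst h1
          exact Quot.sound (Or.inl ⟨rfl, rfl⟩)
        · by_cases h2 : w = y₂
          · refine ⟨Sum.inl y₁, ?_⟩
            subst h2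
            exact Quot.sound (Or.inr ⟨rfl, rfl⟩)
          · exact ⟨Sum.inr ⟨w, h1, h2⟩, rfl⟩
  have h := (Nat.card_eq_of_bijective _ hbij).symm
  rw [Nat.card_sum] at h
  have h2 : Nat.card {w : G₂.V // w ≠ x₂ ∧ w ≠ y₂} + 2 = Nat.card G₂.V := by
    rw [Nat.card_eq_fintype_card, Nat.card_eq_fintype_card]
    have hc : Fintype.card {w : G₂.V // w = x₂ ∨ w = y₂} = 2 := by
      rw [Fintype.card_subtype]
      have : (Finset.univ.filter (fun w : G₂.V => w = x₂ ∨ w = y₂)) = {x₂, y₂} := by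
        ext w; simp
      rw [this, Finset.card_pair hne2]
    have hcompl := Fintype.card_subtype_compl (p := fun w : G₂.V => w = x₂ ∨ w = y₂)
    rw [hc] at hcompl
    have hle : Fintype.card {w : G₂.V // w = x₂ ∨ w = y₂} ≤ Fintype.card G₂.V :=
      Fintype.card_subtype_le _
    rw [hc] at hle
    have heq : Fintype.card {w : G₂.V // w ≠ x₂ ∧ w ≠ y₂}
        = Fintype.card {w : G₂.V // ¬(w = x₂ ∨ w = y₂)} := by
      apply Fintype.card_congr
      apply Equiv.subtypeEquivRight
      intro w
      tauto
    omega
  omega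

lemma gates_ne (hne1 : x₁ ≠ y₁) (hne2 : x₂ ≠ y₂) :
    inc1 G₁ G₂ e₁ e₂ x₁ y₁ x₂ y₂ x₁ ≠ inc1 G₁ G₂ e₁ e₂ x₁ y₁ x₂ y₂ y₁ := by
  intro h
  have := (ts_mk_eq hne1 hne2 (Sum.inl x₁) (Sum.inl y₁)).1 h
  simp [hne1] at this

end TS

end MG
namespace MG

section Proj

variable (G₁ G₂ : MG) (e₁ : G₁.E) (e₂ : G₂.E)

noncomputable def proj1
    (T : Set {u : Option ({f : G₁.E // f ≠ e₁} ⊕ {f : G₂.E // f ≠ e₂}) // u ≠ none}) :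
    Set {f : G₁.E // f ≠ e₁} :=
  {f | (⟨some (Sum.inl f), Option.some_ne_none _⟩ :
    {u : Option ({f : G₁.E // f ≠ e₁} ⊕ {f : G₂.E // f ≠ e₂}) // u ≠ none}) ∈ T}

noncomputable def proj2
    (T : Set {u : Option ({f : G₁.E // f ≠ e₁} ⊕ {f : G₂.E // f ≠ e₂}) // u ≠ none}) :
    Set {f : G₂.E // f ≠ e₂} :=
  {f | (⟨some (Sum.inr f), Option.some_ne_none _⟩ :
    {u : Option ({f : G₁.E // f ≠ e₁} ⊕ {f : G₂.E // f ≠ e₂}) // u ≠ none}) ∈ T}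

end Proj

section ProjLemmas

variable {G₁ G₂ : MG} {e₁ : G₁.E} {e₂ : G₂.E} {x₁ y₁ : G₁.V} {x₂ y₂ : G₂.V}
variable (T : Set {u : Option ({f : G₁.E // f ≠ e₁} ⊕ {f : G₂.E // f ≠ e₂}) // u ≠ none})

lemma val_image_eq_tsSet :
    Subtype.val '' T = tsSet G₁ G₂ e₁ e₂ x₁ y₁ x₂ y₂
      (Subtype.val '' proj1 G₁ G₂ e₁ e₂ T) (Subtype.val '' proj2 G₁ G₂ e₁ e₂ T) := by
  ext u
  rcases u with _ | (f | f)
  · constructor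
    · rintro ⟨⟨t, ht⟩, -, hte⟩
      exact absurd hte ht
    · intro h
      exact h.elim
  · constructor
    · rintro ⟨⟨t, ht⟩, htT, hte⟩
      show f.1 ∈ Subtype.val '' proj1 G₁ G₂ e₁ e₂ T
      refine ⟨f, ?_, rfl⟩
      show (⟨some (Sum.inl f), Option.some_ne_none _⟩ :
        {u : Option ({f : G₁.E // f ≠ e₁} ⊕ {f : G₂.E // f ≠ e₂}) // u ≠ none}) ∈ T
      have : (⟨t, ht⟩ : {u : Option ({f : G₁.E // f ≠ e₁} ⊕ {f : G₂.E // f ≠ e₂}) // u ≠ none})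
          = ⟨some (Sum.inl f), Option.some_ne_none _⟩ := Subtype.ext hte
      rwa [this] at htT
    · rintro ⟨g, hg, hgf⟩
      refine ⟨⟨some (Sum.inl f), Option.some_ne_none _⟩, ?_, rfl⟩
      have : g = f := Subtype.val_injective hgf
      rwa [this] at hg
  · constructor
    · rintro ⟨⟨t, ht⟩, htT, hte⟩
      show f.1 ∈ Subtype.val '' proj2 G₁ G₂ e₁ e₂ T
      refine ⟨f, ?_, rfl⟩
      show (⟨some (Sum.inr f), Option.some_ne_none _⟩ :
        {u : Option ({f : G₁.E // f ≠ e₁} ⊕ {f : G₂.E // f ≠ e₂}) // u ≠ none}) ∈ T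
      have : (⟨t, ht⟩ : {u : Option ({f : G₁.E // f ≠ e₁} ⊕ {f : G₂.E // f ≠ e₂}) // u ≠ none})
          = ⟨some (Sum.inr f), Option.some_ne_none _⟩ := Subtype.ext hte
      rwa [this] at htT
    · rintro ⟨g, hg, hgf⟩
      refine ⟨⟨some (Sum.inr f), Option.some_ne_none _⟩, ?_, rfl⟩
      have : g = f := Subtype.val_injective hgf
      rwa [this] at hg

lemma ncard_proj_split :
    T.ncard = (proj1 G₁ G₂ e₁ e₂ T).ncard + (proj2 G₁ G₂ e₁ e₂ T).ncard := by
  classical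
  rw [← Nat.card_coe_set_eq, ← Nat.card_coe_set_eq, ← Nat.card_coe_set_eq,
    ← Nat.card_sum]
  apply Nat.card_congr
  symm
  apply Equiv.ofBijective (f := Sum.elim
    (fun f : (proj1 G₁ G₂ e₁ e₂ T) => (⟨⟨some (Sum.inl f.1), Option.some_ne_none _⟩, f.2⟩ : T))
    (fun f : (proj2 G₁ G₂ e₁ e₂ T) => (⟨⟨some (Sum.inr f.1), Option.some_ne_none _⟩, f.2⟩ : T)))
  constructor
  · rintro (⟨f, hf⟩ | ⟨f, hf⟩) <;> rintro (⟨g, hg⟩ | ⟨g, hg⟩) <;> intro h <;>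
      simp only [Sum.elim_inl, Sum.elim_inr, Subtype.mk.injEq, Option.some.injEq] at h <;>
      simp_all [Subtype.ext_iff]
  · rintro ⟨⟨u, hu⟩, huT⟩
    rcases u with _ | (f | f)
    · exact absurd rfl hu
    · exact ⟨Sum.inl ⟨f, huT⟩, rfl⟩
    · exact ⟨Sum.inr ⟨f, huT⟩, rfl⟩

lemma val_image_eq_tsSet_del {x₁ y₁ : G₁.V} {x₂ y₂ : G₂.V}
    (T : Set ((G₁.twoSum G₂ e₁ e₂ x₁ y₁ x₂ y₂).delete none).E) :
    Subtype.val '' T = tsSet G₁ G₂ e₁ e₂ x₁ y₁ x₂ y₂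
      (Subtype.val '' proj1 G₁ G₂ e₁ e₂ T) (Subtype.val '' proj2 G₁ G₂ e₁ e₂ T) :=
  val_image_eq_tsSet T

lemma val_image_eq_tsSet_con {x₁ y₁ : G₁.V} {x₂ y₂ : G₂.V}
    (T : Set ((G₁.twoSum G₂ e₁ e₂ x₁ y₁ x₂ y₂).contract none).E) :
    Subtype.val '' T = tsSet G₁ G₂ e₁ e₂ x₁ y₁ x₂ y₂
      (Subtype.val '' proj1 G₁ G₂ e₁ e₂ T) (Subtype.val '' proj2 G₁ G₂ e₁ e₂ T) :=
  val_image_eq_tsSet T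

end ProjLemmas

section TsHelpers

variable {G₁ G₂ : MG} {e₁ : G₁.E} {e₂ : G₂.E} {x₁ y₁ : G₁.V} {x₂ y₂ : G₂.V}
variable {A : Set G₁.E} {B : Set G₂.E}

lemma tsD_lr_1 (hx₁ : G₁.ends e₁ = s(x₁, y₁)) {u : G₁.V} {w : G₂.V}
    (h : tsD G₁ G₂ e₁ e₂ x₁ y₁ x₂ y₂ A B (.inl u) (.inr w)) :
    G₁.ReachVia (insert e₁ A) u x₁ := by
  rcases h with ⟨h1, -⟩ | ⟨h1, -⟩
  · exact reach_mono ext1_sub h1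
  · exact reach_trans (reach_mono ext1_sub h1)
      (reach_symm (reach_step (Set.mem_insert _ _) hx₁))

lemma tsD_lr_2 (hx₂ : G₂.ends e₂ = s(x₂, y₂)) {u : G₁.V} {w : G₂.V}
    (h : tsD G₁ G₂ e₁ e₂ x₁ y₁ x₂ y₂ A B (.inl u) (.inr w)) :
    G₂.ReachVia (insert e₂ B) x₂ w := by
  rcases h with ⟨-, h2⟩ | ⟨-, h2⟩
  · exact reach_mono ext2_sub h2
  · exact reach_trans (reach_step (Set.mem_insert _ _) hx₂) (reach_mono ext2_sub h2)

lemma tsD_rl_1 (hx₂ : G₂.ends e₂ = s(x₂, y₂)) {u : G₁.V} {w : G₂.V}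
    (h : tsD G₁ G₂ e₁ e₂ x₁ y₁ x₂ y₂ A B (.inr w) (.inl u)) :
    G₂.ReachVia (insert e₂ B) w x₂ := by
  rcases h with ⟨h1, -⟩ | ⟨h1, -⟩
  · exact reach_mono ext2_sub h1
  · exact reach_trans (reach_mono ext2_sub h1)
      (reach_symm (reach_step (Set.mem_insert _ _) hx₂))

lemma tsD_rl_2 (hx₁ : G₁.ends e₁ = s(x₁, y₁)) {u : G₁.V} {w : G₂.V}
    (h : tsD G₁ G₂ e₁ e₂ x₁ y₁ x₂ y₂ A B (.inr w) (.inl u)) :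
    G₁.ReachVia (insert e₁ A) x₁ u := by
  rcases h with ⟨-, h2⟩ | ⟨-, h2⟩
  · exact reach_mono ext1_sub h2
  · exact reach_trans (reach_step (Set.mem_insert _ _) hx₁) (reach_mono ext1_sub h2)

lemma liftW1 (hx₁ : G₁.ends e₁ = s(x₁, y₁)) (hA : e₁ ∉ A) {u v : G₁.V}
    (h : G₁.ReachVia (insert e₁ A) u v) :
    (G₁.twoSum G₂ e₁ e₂ x₁ y₁ x₂ y₂).ReachVia
      (insert none (tsSet G₁ G₂ e₁ e₂ x₁ y₁ x₂ y₂ A B))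
      (inc1 G₁ G₂ e₁ e₂ x₁ y₁ x₂ y₂ u) (inc1 G₁ G₂ e₁ e₂ x₁ y₁ x₂ y₂ v) := by
  have hgate : (G₁.twoSum G₂ e₁ e₂ x₁ y₁ x₂ y₂).ReachVia
      (insert none (tsSet G₁ G₂ e₁ e₂ x₁ y₁ x₂ y₂ A B))
      (inc1 G₁ G₂ e₁ e₂ x₁ y₁ x₂ y₂ x₁) (inc1 G₁ G₂ e₁ e₂ x₁ y₁ x₂ y₂ y₁) :=
    reach_step (Set.mem_insert _ _) rfl
  have hmono : ∀ a b : G₁.V, G₁.ReachVia A a b →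
      (G₁.twoSum G₂ e₁ e₂ x₁ y₁ x₂ y₂).ReachVia
        (insert none (tsSet G₁ G₂ e₁ e₂ x₁ y₁ x₂ y₂ A B))
        (inc1 G₁ G₂ e₁ e₂ x₁ y₁ x₂ y₂ a) (inc1 G₁ G₂ e₁ e₂ x₁ y₁ x₂ y₂ b) :=
    fun a b hab => reach_mono (Set.subset_insert _ _) (lift1 hA hab)
  rcases (reach_insert_iff hx₁).1 h with h | ⟨h1, h2⟩ | ⟨h1, h2⟩
  · exact hmono _ _ h
  · exact reach_trans (hmono _ _ h1) (reach_trans hgate (hmono _ _ h2))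
  · exact reach_trans (hmono _ _ h1) (reach_trans (reach_symm hgate) (hmono _ _ h2))

lemma liftW2 (hx₂ : G₂.ends e₂ = s(x₂, y₂)) (hB : e₂ ∉ B) {w w' : G₂.V}
    (h : G₂.ReachVia (insert e₂ B) w w') :
    (G₁.twoSum G₂ e₁ e₂ x₁ y₁ x₂ y₂).ReachVia
      (insert none (tsSet G₁ G₂ e₁ e₂ x₁ y₁ x₂ y₂ A B))
      (inc2 G₁ G₂ e₁ e₂ x₁ y₁ x₂ y₂ w) (inc2 G₁ G₂ e₁ e₂ x₁ y₁ x₂ y₂ w') := by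
  have hgate : (G₁.twoSum G₂ e₁ e₂ x₁ y₁ x₂ y₂).ReachVia
      (insert none (tsSet G₁ G₂ e₁ e₂ x₁ y₁ x₂ y₂ A B))
      (inc2 G₁ G₂ e₁ e₂ x₁ y₁ x₂ y₂ x₂) (inc2 G₁ G₂ e₁ e₂ x₁ y₁ x₂ y₂ y₂) := by
    rw [← incx_eq, ← incy_eq]
    exact reach_step (Set.mem_insert _ _) rfl
  have hmono : ∀ a b : G₂.V, G₂.ReachVia B a b →
      (G₁.twoSum G₂ e₁ e₂ x₁ y₁ x₂ y₂).ReachVia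
        (insert none (tsSet G₁ G₂ e₁ e₂ x₁ y₁ x₂ y₂ A B))
        (inc2 G₁ G₂ e₁ e₂ x₁ y₁ x₂ y₂ a) (inc2 G₁ G₂ e₁ e₂ x₁ y₁ x₂ y₂ b) :=
    fun a b hab => reach_mono (Set.subset_insert _ _) (lift2 hB hab)
  rcases (reach_insert_iff hx₂).1 h with h | ⟨h1, h2⟩ | ⟨h1, h2⟩
  · exact hmono _ _ h
  · exact reach_trans (hmono _ _ h1) (reach_trans hgate (hmono _ _ h2))
  · exact reach_trans (hmono _ _ h1) (reach_trans (reach_symm hgate) (hmono _ _ h2))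

end TsHelpers

end MG
namespace MG

section MainChar

variable {G₁ G₂ : MG} {e₁ : G₁.E} {e₂ : G₂.E} {x₁ y₁ : G₁.V} {x₂ y₂ : G₂.V}

lemma ST_delete_iff_ts (hx₁ : G₁.ends e₁ = s(x₁, y₁)) (hx₂ : G₂.ends e₂ = s(x₂, y₂))
    (hne1 : x₁ ≠ y₁) (hne2 : x₂ ≠ y₂)
    (T : Set ((G₁.twoSum G₂ e₁ e₂ x₁ y₁ x₂ y₂).delete none).E) :
    ((G₁.twoSum G₂ e₁ e₂ x₁ y₁ x₂ y₂).delete none).IsSpanningTree T ↔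
      ((G₁.contract e₁).IsSpanningTree (proj1 G₁ G₂ e₁ e₂ T) ∧
        (G₂.delete e₂).IsSpanningTree (proj2 G₁ G₂ e₁ e₂ T)) ∨
      ((G₁.delete e₁).IsSpanningTree (proj1 G₁ G₂ e₁ e₂ T) ∧
        (G₂.contract e₂).IsSpanningTree (proj2 G₁ G₂ e₁ e₂ T)) := by
  classical
  have hA : e₁ ∉ Subtype.val '' proj1 G₁ G₂ e₁ e₂ T := not_mem_image_val _
  have hB : e₂ ∉ Subtype.val '' proj2 G₁ G₂ e₁ e₂ T := not_mem_image_val _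
  have hTn := ncard_proj_split T
  have haA : (Subtype.val '' proj1 G₁ G₂ e₁ e₂ T).ncard = (proj1 G₁ G₂ e₁ e₂ T).ncard :=
    ncard_image_val _
  have hbB : (Subtype.val '' proj2 G₁ G₂ e₁ e₂ T).ncard = (proj2 G₁ G₂ e₁ e₂ T).ncard :=
    ncard_image_val _
  have hinsA : (insert e₁ (Subtype.val '' proj1 G₁ G₂ e₁ e₂ T)).ncard
      = (Subtype.val '' proj1 G₁ G₂ e₁ e₂ T).ncard + 1 :=
    Set.ncard_insert_of_notMem hA (Set.toFinite _)
  have hinsB : (insert e₂ (Subtype.val '' proj2 G₁ G₂ e₁ e₂ T)).ncard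
      = (Subtype.val '' proj2 G₁ G₂ e₁ e₂ T).ncard + 1 :=
    Set.ncard_insert_of_notMem hB (Set.toFinite _)
  have hHV := ts_card (G₁ := G₁) (G₂ := G₂) (e₁ := e₁) (e₂ := e₂) hne1 hne2
  have hval := val_image_eq_tsSet_del T
  have hmaster := ts_reach_iff (A := Subtype.val '' proj1 G₁ G₂ e₁ e₂ T)
    (B := Subtype.val '' proj2 G₁ G₂ e₁ e₂ T) hx₁ hx₂ hA hB
  constructor
  · intro hST
    obtain ⟨hconn, hcard⟩ := (delete_ST_iff T).1 hST
    rw [hval] at hconn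
    have hD : ∀ s t, tsD G₁ G₂ e₁ e₂ x₁ y₁ x₂ y₂ (Subtype.val '' proj1 G₁ G₂ e₁ e₂ T)
        (Subtype.val '' proj2 G₁ G₂ e₁ e₂ T) s t :=
      fun s t => (hmaster s t).1 (hconn _ _)
    have hd := ext1_xy_back hx₁ (hD (.inl x₁) (.inl y₁))
    by_cases hc2 : G₂.ReachVia (Subtype.val '' proj2 G₁ G₂ e₁ e₂ T) x₂ y₂
    · by_cases hc1 : G₁.ReachVia (Subtype.val '' proj1 G₁ G₂ e₁ e₂ T) x₁ y₁
      · exfalso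
        have hcA : ∀ u v, G₁.ReachVia (Subtype.val '' proj1 G₁ G₂ e₁ e₂ T) u v := by
          intro u v
          rcases ext1_back hx₁ (hD (.inl u) (.inl v)) with h | ⟨h1, h2⟩ | ⟨h1, h2⟩
          · exact h
          · exact reach_trans h1 (reach_trans hc1 h2)
          · exact reach_trans h1 (reach_trans (reach_symm hc1) h2)
        have hcB : ∀ w w', G₂.ReachVia (Subtype.val '' proj2 G₁ G₂ e₁ e₂ T) w w' := by
          intro w w'
          rcases ext2_back hx₂ (hD (.inr w) (.inr w')) with h | ⟨h1, h2⟩ | ⟨h1, h2⟩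
          · exact h
          · exact reach_trans h1 (reach_trans hc2 h2)
          · exact reach_trans h1 (reach_trans (reach_symm hc2) h2)
        have hn1 := card_le_of_connected hcA
        have hn2 := card_le_of_connected hcB
        dsimp only [MG.delete, MG.contract, MG.twoSum] at *; omega
      · -- side 2 connects the gates, side 1 does not: (contract, delete)
        have hcA : ∀ u v, G₁.ReachVia (insert e₁ (Subtype.val '' proj1 G₁ G₂ e₁ e₂ T)) u v := by
          intro u v
          exact reach_mono ext1_sub (hD (.inl u) (.inl v))
        have hcB : ∀ w w', G₂.ReachVia (Subtype.val '' proj2 G₁ G₂ e₁ e₂ T) w w' := by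
          intro w w'
          have h2 : G₂.ReachVia (ext2 G₁ G₂ e₁ e₂ x₁ y₁ x₂ y₂
              (Subtype.val '' proj1 G₁ G₂ e₁ e₂ T) (Subtype.val '' proj2 G₁ G₂ e₁ e₂ T)) w w' :=
            hD (.inr w) (.inr w')
          unfold ext2 at h2
          rwa [if_neg hc1] at h2
        have hn1 := card_le_of_connected hcA
        have hn2 := card_le_of_connected hcB
        exact Or.inl ⟨(contract_ST_iff hx₁ hne1 _).2 ⟨hcA, by dsimp only [MG.delete, MG.contract, MG.twoSum] at *; omega⟩,
          (delete_ST_iff _).2 ⟨hcB, by dsimp only [MG.delete, MG.contract, MG.twoSum] at *; omega⟩⟩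
    · have hc1 : G₁.ReachVia (Subtype.val '' proj1 G₁ G₂ e₁ e₂ T) x₁ y₁ := hd.resolve_right hc2
      have hcB : ∀ w w', G₂.ReachVia (insert e₂ (Subtype.val '' proj2 G₁ G₂ e₁ e₂ T)) w w' := by
        intro w w'
        exact reach_mono ext2_sub (hD (.inr w) (.inr w'))
      have hcA : ∀ u v, G₁.ReachVia (Subtype.val '' proj1 G₁ G₂ e₁ e₂ T) u v := by
        intro u v
        have h2 : G₁.ReachVia (ext1 G₁ G₂ e₁ e₂ x₁ y₁ x₂ y₂
            (Subtype.val '' proj1 G₁ G₂ e₁ e₂ T) (Subtype.val '' proj2 G₁ G₂ e₁ e₂ T)) u v :=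
          hD (.inl u) (.inl v)
        unfold ext1 at h2
        rwa [if_neg hc2] at h2
      have hn1 := card_le_of_connected hcA
      have hn2 := card_le_of_connected hcB
      exact Or.inr ⟨(delete_ST_iff _).2 ⟨hcA, by dsimp only [MG.delete, MG.contract, MG.twoSum] at *; omega⟩,
        (contract_ST_iff hx₂ hne2 _).2 ⟨hcB, by dsimp only [MG.delete, MG.contract, MG.twoSum] at *; omega⟩⟩
  · rintro (⟨hST1, hST2⟩ | ⟨hST1, hST2⟩)
    · obtain ⟨hconn1, hcard1⟩ := (contract_ST_iff hx₁ hne1 _).1 hST1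
      obtain ⟨hconn2, hcard2⟩ := (delete_ST_iff _).1 hST2
      have hc2 : G₂.ReachVia (Subtype.val '' proj2 G₁ G₂ e₁ e₂ T) x₂ y₂ := hconn2 x₂ y₂
      have hext1 : ext1 G₁ G₂ e₁ e₂ x₁ y₁ x₂ y₂ (Subtype.val '' proj1 G₁ G₂ e₁ e₂ T)
          (Subtype.val '' proj2 G₁ G₂ e₁ e₂ T)
          = insert e₁ (Subtype.val '' proj1 G₁ G₂ e₁ e₂ T) := by
        unfold ext1; rw [if_pos hc2]
      refine (delete_ST_iff T).2 ⟨?_, by dsimp only [MG.delete, MG.contract, MG.twoSum] at *; omega⟩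
      rw [hval]
      intro q q'
      obtain ⟨s, rfl⟩ := Quot.exists_rep q
      obtain ⟨t, rfl⟩ := Quot.exists_rep q'
      refine (hmaster s t).2 ?_
      rcases s with u | w <;> rcases t with v | w'
      · show G₁.ReachVia _ u v
        rw [hext1]
        exact hconn1 u v
      · exact Or.inl ⟨by rw [hext1]; exact hconn1 u x₁,
          reach_mono subset_ext2 (hconn2 x₂ w')⟩
      · exact Or.inl ⟨reach_mono subset_ext2 (hconn2 w x₂),
          by rw [hext1]; exact hconn1 x₁ v⟩
      · exact reach_mono subset_ext2 (hconn2 w w')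
    · obtain ⟨hconn1, hcard1⟩ := (delete_ST_iff _).1 hST1
      obtain ⟨hconn2, hcard2⟩ := (contract_ST_iff hx₂ hne2 _).1 hST2
      have hc1 : G₁.ReachVia (Subtype.val '' proj1 G₁ G₂ e₁ e₂ T) x₁ y₁ := hconn1 x₁ y₁
      have hext2 : ext2 G₁ G₂ e₁ e₂ x₁ y₁ x₂ y₂ (Subtype.val '' proj1 G₁ G₂ e₁ e₂ T)
          (Subtype.val '' proj2 G₁ G₂ e₁ e₂ T)
          = insert e₂ (Subtype.val '' proj2 G₁ G₂ e₁ e₂ T) := by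
        unfold ext2; rw [if_pos hc1]
      refine (delete_ST_iff T).2 ⟨?_, by dsimp only [MG.delete, MG.contract, MG.twoSum] at *; omega⟩
      rw [hval]
      intro q q'
      obtain ⟨s, rfl⟩ := Quot.exists_rep q
      obtain ⟨t, rfl⟩ := Quot.exists_rep q'
      refine (hmaster s t).2 ?_
      rcases s with u | w <;> rcases t with v | w'
      · exact reach_mono subset_ext1 (hconn1 u v)
      · exact Or.inl ⟨reach_mono subset_ext1 (hconn1 u x₁),
          by rw [hext2]; exact hconn2 x₂ w'⟩
      · exact Or.inl ⟨by rw [hext2]; exact hconn2 w x₂,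
          reach_mono subset_ext1 (hconn1 x₁ v)⟩
      · show G₂.ReachVia _ w w'
        rw [hext2]
        exact hconn2 w w'

lemma ST_contract_iff_ts (hx₁ : G₁.ends e₁ = s(x₁, y₁)) (hx₂ : G₂.ends e₂ = s(x₂, y₂))
    (hne1 : x₁ ≠ y₁) (hne2 : x₂ ≠ y₂)
    (T : Set ((G₁.twoSum G₂ e₁ e₂ x₁ y₁ x₂ y₂).contract none).E) :
    ((G₁.twoSum G₂ e₁ e₂ x₁ y₁ x₂ y₂).contract none).IsSpanningTree T ↔
      (G₁.contract e₁).IsSpanningTree (proj1 G₁ G₂ e₁ e₂ T) ∧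
        (G₂.contract e₂).IsSpanningTree (proj2 G₁ G₂ e₁ e₂ T) := by
  classical
  have hA : e₁ ∉ Subtype.val '' proj1 G₁ G₂ e₁ e₂ T := not_mem_image_val _
  have hB : e₂ ∉ Subtype.val '' proj2 G₁ G₂ e₁ e₂ T := not_mem_image_val _
  have hTn := ncard_proj_split T
  have haA : (Subtype.val '' proj1 G₁ G₂ e₁ e₂ T).ncard = (proj1 G₁ G₂ e₁ e₂ T).ncard :=
    ncard_image_val _
  have hbB : (Subtype.val '' proj2 G₁ G₂ e₁ e₂ T).ncard = (proj2 G₁ G₂ e₁ e₂ T).ncard :=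
    ncard_image_val _
  have hinsA : (insert e₁ (Subtype.val '' proj1 G₁ G₂ e₁ e₂ T)).ncard
      = (Subtype.val '' proj1 G₁ G₂ e₁ e₂ T).ncard + 1 :=
    Set.ncard_insert_of_notMem hA (Set.toFinite _)
  have hinsB : (insert e₂ (Subtype.val '' proj2 G₁ G₂ e₁ e₂ T)).ncard
      = (Subtype.val '' proj2 G₁ G₂ e₁ e₂ T).ncard + 1 :=
    Set.ncard_insert_of_notMem hB (Set.toFinite _)
  have hHV := ts_card (G₁ := G₁) (G₂ := G₂) (e₁ := e₁) (e₂ := e₂) hne1 hne2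
  have hval := val_image_eq_tsSet_con T
  have hmaster := ts_reach_iff (A := Subtype.val '' proj1 G₁ G₂ e₁ e₂ T)
    (B := Subtype.val '' proj2 G₁ G₂ e₁ e₂ T) hx₁ hx₂ hA hB
  have hgne := gates_ne (G₁ := G₁) (G₂ := G₂) (e₁ := e₁) (e₂ := e₂) hne1 hne2
  have hends : (G₁.twoSum G₂ e₁ e₂ x₁ y₁ x₂ y₂).ends none
      = s(inc1 G₁ G₂ e₁ e₂ x₁ y₁ x₂ y₂ x₁, inc1 G₁ G₂ e₁ e₂ x₁ y₁ x₂ y₂ y₁) := rfl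
  constructor
  · intro hST
    obtain ⟨hconn, hcard⟩ := (contract_ST_iff hends hgne T).1 hST
    rw [hval] at hconn
    have hconn1 : ∀ u v, G₁.ReachVia (insert e₁ (Subtype.val '' proj1 G₁ G₂ e₁ e₂ T)) u v := by
      intro u v
      rcases (reach_insert_iff hends).1
          (hconn (Quot.mk _ (Sum.inl u)) (Quot.mk _ (Sum.inl v))) with h | ⟨h1, h2⟩ | ⟨h1, h2⟩
      · exact reach_mono ext1_sub ((hmaster (Sum.inl u) (Sum.inl v)).1 h)
      · have g1 := reach_mono ext1_sub ((hmaster (Sum.inl u) (Sum.inl x₁)).1 h1)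
        have g2 := reach_mono ext1_sub ((hmaster (Sum.inl y₁) (Sum.inl v)).1 h2)
        exact reach_trans g1 (reach_trans (reach_step (Set.mem_insert _ _) hx₁) g2)
      · have g1 := reach_mono ext1_sub ((hmaster (Sum.inl u) (Sum.inl y₁)).1 h1)
        have g2 := reach_mono ext1_sub ((hmaster (Sum.inl x₁) (Sum.inl v)).1 h2)
        exact reach_trans g1
          (reach_trans (reach_symm (reach_step (Set.mem_insert _ _) hx₁)) g2)
    have hconn2 : ∀ w w', G₂.ReachVia (insert e₂ (Subtype.val '' proj2 G₁ G₂ e₁ e₂ T)) w w' := by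
      intro w w'
      rcases (reach_insert_iff hends).1
          (hconn (Quot.mk _ (Sum.inr w)) (Quot.mk _ (Sum.inr w'))) with h | ⟨h1, h2⟩ | ⟨h1, h2⟩
      · exact reach_mono ext2_sub ((hmaster (Sum.inr w) (Sum.inr w')).1 h)
      · have g1 := tsD_rl_1 hx₂ ((hmaster (Sum.inr w) (Sum.inl x₁)).1 h1)
        have g2 := tsD_lr_2 hx₂ ((hmaster (Sum.inl y₁) (Sum.inr w')).1 h2)
        exact reach_trans g1 g2
      · have g1 := tsD_rl_1 hx₂ ((hmaster (Sum.inr w) (Sum.inl y₁)).1 h1)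
        have g2 := tsD_lr_2 hx₂ ((hmaster (Sum.inl x₁) (Sum.inr w')).1 h2)
        exact reach_trans g1 g2
    have hn1 := card_le_of_connected hconn1
    have hn2 := card_le_of_connected hconn2
    exact ⟨(contract_ST_iff hx₁ hne1 _).2 ⟨hconn1, by dsimp only [MG.delete, MG.contract, MG.twoSum] at *; omega⟩,
      (contract_ST_iff hx₂ hne2 _).2 ⟨hconn2, by dsimp only [MG.delete, MG.contract, MG.twoSum] at *; omega⟩⟩
  · rintro ⟨hST1, hST2⟩
    obtain ⟨hconn1, hcard1⟩ := (contract_ST_iff hx₁ hne1 _).1 hST1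
    obtain ⟨hconn2, hcard2⟩ := (contract_ST_iff hx₂ hne2 _).1 hST2
    refine (contract_ST_iff hends hgne T).2 ⟨?_, by dsimp only [MG.delete, MG.contract, MG.twoSum] at *; omega⟩
    rw [hval]
    intro q q'
    obtain ⟨s, rfl⟩ := Quot.exists_rep q
    obtain ⟨t, rfl⟩ := Quot.exists_rep q'
    rcases s with u | w <;> rcases t with v | w'
    · exact liftW1 hx₁ hA (hconn1 u v)
    · refine reach_trans (liftW1 hx₁ hA (hconn1 u x₁)) ?_
      have h2 := liftW2 (e₁ := e₁) (x₁ := x₁) (y₁ := y₁) (A := Subtype.val '' proj1 G₁ G₂ e₁ e₂ T) (B := Subtype.val '' proj2 G₁ G₂ e₁ e₂ T) hx₂ hB (hconn2 x₂ w')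
      rw [← incx_eq] at h2
      exact h2
    · refine reach_trans (liftW2 hx₂ hB (hconn2 w x₂)) ?_
      have h2 := liftW1 (e₂ := e₂) (x₂ := x₂) (y₂ := y₂) (A := Subtype.val '' proj1 G₁ G₂ e₁ e₂ T) (B := Subtype.val '' proj2 G₁ G₂ e₁ e₂ T) hx₁ hA (hconn1 x₁ v)
      rw [incx_eq] at h2
      exact h2
    · exact liftW2 hx₂ hB (hconn2 w w')

end MainChar

end MG
namespace MG

/-- Splitting a subtype of pairs according to an exclusive disjunction. -/
noncomputable def subtypeOrEquiv {α β : Type} (p r : α → Prop) (q s : β → Prop)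
    (hd : ∀ a, ¬(p a ∧ r a)) :
    {x : α × β // (p x.1 ∧ q x.2) ∨ (r x.1 ∧ s x.2)} ≃
      ({a // p a} × {b // q b}) ⊕ ({a // r a} × {b // s b}) := by
  refine (Equiv.ofBijective (Sum.elim
    (fun y : {a // p a} × {b // q b} => (⟨(y.1.1, y.2.1), Or.inl ⟨y.1.2, y.2.2⟩⟩ :
      {x : α × β // (p x.1 ∧ q x.2) ∨ (r x.1 ∧ s x.2)}))
    (fun y : {a // r a} × {b // s b} => ⟨(y.1.1, y.2.1), Or.inr ⟨y.1.2, y.2.2⟩⟩)) ?_).symm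
  constructor
  · rintro (⟨⟨a, ha⟩, ⟨b, hb⟩⟩ | ⟨⟨a, ha⟩, ⟨b, hb⟩⟩) (⟨⟨a', ha'⟩, ⟨b', hb'⟩⟩ | ⟨⟨a', ha'⟩, ⟨b', hb'⟩⟩) h <;>
      simp only [Sum.elim_inl, Sum.elim_inr, Subtype.mk.injEq, Prod.mk.injEq] at h
    · simp_all
    · exact absurd ⟨h.1 ▸ ha, ha'⟩ (hd a')
    · exact absurd ⟨ha', h.1 ▸ ha⟩ (hd a')
    · simp_all
  · rintro ⟨⟨a, b⟩, hab | hab⟩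
    · exact ⟨Sum.inl (⟨a, hab.1⟩, ⟨b, hab.2⟩), rfl⟩
    · exact ⟨Sum.inr (⟨a, hab.1⟩, ⟨b, hab.2⟩), rfl⟩

/-- Splitting an edge set of the two-sum into its two sides. -/
noncomputable def pairEquiv (G₁ G₂ : MG) (e₁ : G₁.E) (e₂ : G₂.E) :
    Set {u : Option ({f : G₁.E // f ≠ e₁} ⊕ {f : G₂.E // f ≠ e₂}) // u ≠ none} ≃
      Set {f : G₁.E // f ≠ e₁} × Set {f : G₂.E // f ≠ e₂} where
  toFun T := (proj1 G₁ G₂ e₁ e₂ T, proj2 G₁ G₂ e₁ e₂ T)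
  invFun p := {u | Option.elim u.1 False (Sum.elim (· ∈ p.1) (· ∈ p.2))}
  left_inv T := by
    ext ⟨u, hu⟩
    rcases u with _ | (f | f)
    · exact absurd rfl hu
    · exact Iff.rfl
    · exact Iff.rfl
  right_inv p := rfl

lemma ST_exclusive {G : MG} {e : G.E} {x y : G.V} (hxy : G.ends e = s(x, y)) (hne : x ≠ y)
    (T : Set {f : G.E // f ≠ e}) :
    ¬((G.contract e).IsSpanningTree T ∧ (G.delete e).IsSpanningTree T) := by
  rintro ⟨⟨-, h1⟩, ⟨-, h2⟩⟩
  have hc := card_contract_V hxy hne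
  have hd : Nat.card (G.delete e).V = Nat.card G.V := rfl
  dsimp only [MG.delete, MG.contract, MG.twoSum] at *; omega

end MG
/-- Let `(G, e)` be the 2-sum of `(G₁, e₁)` and `(G₂, e₂)`, where each
`eᵢ` is neither a bridge nor a loop of `Gᵢ`.  Then the spanning trees of `G \ e` are in
bijection with `(spanning trees of G₁/e₁) × (spanning trees of G₂ \ e₂) ⊕
(spanning trees of G₁ \ e₁) × (spanning trees of G₂/e₂)`, and the spanning trees of `G/e`
are in bijection with `(spanning trees of G₁/e₁) × (spanning trees of G₂/e₂)`. -/
theorem twoSum_spanningTrees (G₁ G₂ : MG) (e₁ : G₁.E) (e₂ : G₂.E)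
    (x₁ y₁ : G₁.V) (x₂ y₂ : G₂.V)
    (hx₁ : G₁.ends e₁ = s(x₁, y₁)) (hx₂ : G₂.ends e₂ = s(x₂, y₂))
    (hl₁ : ¬ G₁.IsLoop e₁) (hb₁ : ¬ G₁.IsBridge e₁)
    (hl₂ : ¬ G₂.IsLoop e₂) (hb₂ : ¬ G₂.IsBridge e₂) :
    (Nonempty
      ({T : Set ((G₁.twoSum G₂ e₁ e₂ x₁ y₁ x₂ y₂).delete none).E //
          ((G₁.twoSum G₂ e₁ e₂ x₁ y₁ x₂ y₂).delete none).IsSpanningTree T} ≃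
        ({T₁ : Set (G₁.contract e₁).E // (G₁.contract e₁).IsSpanningTree T₁} ×
            {T₂ : Set (G₂.delete e₂).E // (G₂.delete e₂).IsSpanningTree T₂}) ⊕
        ({T₁ : Set (G₁.delete e₁).E // (G₁.delete e₁).IsSpanningTree T₁} ×
            {T₂ : Set (G₂.contract e₂).E // (G₂.contract e₂).IsSpanningTree T₂}))) ∧
    (Nonempty
      ({T : Set ((G₁.twoSum G₂ e₁ e₂ x₁ y₁ x₂ y₂).contract none).E //
          ((G₁.twoSum G₂ e₁ e₂ x₁ y₁ x₂ y₂).contract none).IsSpanningTree T} ≃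
        {T₁ : Set (G₁.contract e₁).E // (G₁.contract e₁).IsSpanningTree T₁} ×
          {T₂ : Set (G₂.contract e₂).E // (G₂.contract e₂).IsSpanningTree T₂})) := by
  have hne1 : x₁ ≠ y₁ := fun h => hl₁ (by
    show (G₁.ends e₁).IsDiag
    rw [hx₁]
    exact Sym2.mk_isDiag_iff.2 h)
  have hne2 : x₂ ≠ y₂ := fun h => hl₂ (by
    show (G₂.ends e₂).IsDiag
    rw [hx₂]
    exact Sym2.mk_isDiag_iff.2 h)
  constructor
  · exact ⟨(Equiv.subtypeEquiv (MG.pairEquiv G₁ G₂ e₁ e₂)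
      (fun T => MG.ST_delete_iff_ts hx₁ hx₂ hne1 hne2 T)).trans
      (MG.subtypeOrEquiv _ _ _ _ (fun T₁ => MG.ST_exclusive hx₁ hne1 T₁))⟩
  · exact ⟨(Equiv.subtypeEquiv (MG.pairEquiv G₁ G₂ e₁ e₂)
      (fun T => MG.ST_contract_iff_ts hx₁ hx₂ hne1 hne2 T)).trans
      Equiv.subtypeProdEquivProd⟩
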